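/- Fix L > 0 and n ∈ ℕ. For every z ∈ ℂⁿ and every φ ∈ ℝ, D(z) = D(e^{iφ}z), where D is the least common denominator of a complex vector at parameter L. -/

import Mathlib

open MeasureTheory ProbabilityTheory

noncomputable def euclNormC {n : ℕ} (v : Fin n → ℂ) : ℝ := Real.sqrt (∑ i, ‖v i‖ ^ 2)

noncomputable def euclNormR {n : ℕ} (v : Fin n → ℝ) : ℝ := Real.sqrt (∑ i, v i ^ 2)

noncomputable def opNormR {n : ℕ} (M : Matrix (Fin n) (Fin n) ℝ) : ℝ :=
  ‖Matrix.toEuclideanCLM (𝕜 := ℝ) M‖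

noncomputable def opNormC {n : ℕ} (M : Matrix (Fin n) (Fin n) ℂ) : ℝ :=
  ‖Matrix.toEuclideanCLM (𝕜 := ℂ) M‖

def cplx {n : ℕ} (M : Matrix (Fin n) (Fin n) ℝ) : Matrix (Fin n) (Fin n) ℂ :=
  M.map (fun x => (x : ℂ))

def SatisfiesAssumption (μ : Measure ℝ) (q T : ℝ) : Prop :=
  0 < q ∧ q < 1 ∧ 0 < T ∧
  (∀ u : ℝ, (μ {x | |x - u| < 1}).toReal ≤ 1 - q) ∧
  q / 2 ≤ ((μ.prod μ) {p | 1 ≤ |p.1 - p.2| ∧ |p.1 - p.2| ≤ T}).toReal ∧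
  (μ {x | T < |x|}).toReal ≤ q / 2

def IsIIDEntries {Ω : Type} [MeasureSpace Ω] {n : ℕ}
    (N : Ω → Matrix (Fin n) (Fin n) ℝ) (μ : Measure ℝ) : Prop :=
  (∀ i j, Measurable fun ω => N ω i j) ∧
  (∀ i j, Measure.map (fun ω => N ω i j) ℙ = μ) ∧
  iIndepFun (m := fun _ : Fin n × Fin n => inferInstance) (fun p ω => N ω p.1 p.2) ℙ

def IsUnitEigenvector {n : ℕ} (M : Matrix (Fin n) (Fin n) ℂ) (u : Fin n → ℂ) : Prop :=
  euclNormC u = 1 ∧ ∃ l : ℂ, M.mulVec u = l • u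

/-- Euclidean distance from a vector to the integer lattice `ℤⁿ`
(`round` gives the nearest integer to each coordinate). -/
noncomputable def distToIntLattice {n : ℕ} (v : Fin n → ℝ) : ℝ :=
  Real.sqrt (∑ j, |v j - round (v j)| ^ 2)

/-- `log₊ x = max (log x) 0`. -/
noncomputable def logPlus (x : ℝ) : ℝ := max (Real.log x) 0

/-- The least common denominator (LCD) of a matrix `U ∈ ℝ^{m×n}` at parameter `L`:
`inf {‖θ‖ : θ ∈ ℝᵐ, dist(Uᵀθ, ℤⁿ) < L √(log₊(‖Uᵀθ‖/L))}`. -/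
noncomputable def lcdMatrix {m n : ℕ} (L : ℝ) (U : Matrix (Fin m) (Fin n) ℝ) : ℝ :=
  sInf {r : ℝ | ∃ θ : Fin m → ℝ, r = euclNormR θ ∧
    distToIntLattice (Matrix.vecMul θ U) <
      L * Real.sqrt (logPlus (euclNormR (Matrix.vecMul θ U) / L))}

/-- The LCD of a complex vector `z = x + iy` is the LCD of the `2 × n` matrix with
rows `xᵀ` and `yᵀ`. -/
noncomputable def lcdC {n : ℕ} (L : ℝ) (z : Fin n → ℂ) : ℝ :=
  lcdMatrix L (Matrix.of ![fun j => (z j).re, fun j => (z j).im])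

/-- The real-imaginary correlation `d(z) = √(‖x‖²‖y‖² − (x·y)²)` of `z = x + iy`. -/
noncomputable def riCorr {n : ℕ} (z : Fin n → ℂ) : ℝ :=
  Real.sqrt ((∑ j, (z j).re ^ 2) * (∑ j, (z j).im ^ 2) - (∑ j, (z j).re * (z j).im) ^ 2)

/-- The defining set of the LCD of a complex vector. -/
def lcdSet {n : ℕ} (L : ℝ) (z : Fin n → ℂ) : Set ℝ :=
  {r : ℝ | ∃ θ : Fin 2 → ℝ, r = euclNormR θ ∧
    distToIntLattice (Matrix.vecMul θ (Matrix.of ![fun j => (z j).re, fun j => (z j).im])) <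
      L * Real.sqrt (logPlus (euclNormR
        (Matrix.vecMul θ (Matrix.of ![fun j => (z j).re, fun j => (z j).im])) / L))}

lemma lcdC_eq_sInf {n : ℕ} (L : ℝ) (z : Fin n → ℂ) : lcdC L z = sInf (lcdSet L z) := rfl

lemma lcdSet_subset {n : ℕ} (L : ℝ) (z : Fin n → ℂ) (φ : ℝ) :
    lcdSet L z ⊆ lcdSet L (fun j => Complex.exp (φ * Complex.I) * z j) := by
  rintro r ⟨θ, hr, hθ⟩
  refine ⟨![Real.cos φ * θ 0 - Real.sin φ * θ 1, Real.sin φ * θ 0 + Real.cos φ * θ 1], ?_, ?_⟩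
  · rw [hr]
    unfold euclNormR
    congr 1
    simp only [Fin.sum_univ_two, Matrix.cons_val_zero, Matrix.cons_val_one, Matrix.head_cons]
    nlinarith [Real.sin_sq_add_cos_sq φ]
  · have hv : Matrix.vecMul ![Real.cos φ * θ 0 - Real.sin φ * θ 1,
        Real.sin φ * θ 0 + Real.cos φ * θ 1]
        (Matrix.of ![fun j => (Complex.exp (φ * Complex.I) * z j).re,
          fun j => (Complex.exp (φ * Complex.I) * z j).im]) =
        Matrix.vecMul θ (Matrix.of ![fun j => (z j).re, fun j => (z j).im]) := by
      funext j
      simp only [Matrix.vecMul, dotProduct, Fin.sum_univ_two, Matrix.of_apply,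
        Matrix.cons_val_zero, Matrix.cons_val_one, Matrix.head_cons, Complex.mul_re,
        Complex.mul_im, Complex.exp_ofReal_mul_I_re, Complex.exp_ofReal_mul_I_im]
      linear_combination (θ 0 * (z j).re + θ 1 * (z j).im) * Real.sin_sq_add_cos_sq φ
    rw [hv]
    exact hθ

lemma rot_rot {n : ℕ} (z : Fin n → ℂ) (φ : ℝ) :
    (fun j => Complex.exp ((-φ : ℝ) * Complex.I) *
      ((fun j => Complex.exp (φ * Complex.I) * z j) j)) = z := by
  funext j
  rw [← mul_assoc, ← Complex.exp_add]
  push_cast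
  ring_nf
  simp

lemma lcdSet_rot {n : ℕ} (L : ℝ) (z : Fin n → ℂ) (φ : ℝ) :
    lcdSet L z = lcdSet L (fun j => Complex.exp (φ * Complex.I) * z j) := by
  refine le_antisymm (lcdSet_subset L z φ) ?_
  have h := lcdSet_subset L (fun j => Complex.exp (φ * Complex.I) * z j) (-φ)
  rw [show (fun j => Complex.exp (↑(-φ : ℝ) * Complex.I) *
      ((fun j => Complex.exp (φ * Complex.I) * z j) j)) = z from rot_rot z φ] at h
  exact h

theorem statement13 (L : ℝ) (hL : 0 < L) (n : ℕ) (z : Fin n → ℂ) (φ : ℝ) :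
    lcdC L z = lcdC L (fun j => Complex.exp (φ * Complex.I) * z j) := by
  rw [lcdC_eq_sInf, lcdC_eq_sInf, lcdSet_rot L z φ]
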